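/- Suppose the cost norm is the Euclidean norm ‖·‖ = ‖·‖₂, the margin-without-intercept assumption and the boundedness assumption hold, and let (y_t,b_t) be the classifiers generated by Algorithm 3 with cone 𝕃 = ℝ^d×{0} and stepsize γ = 1 on a sequence of agents A_0,…,A_T ∈ 𝒜. Then b_t = 0 for all t, Σ_{t∈M_T} L_hinge( (y_*/(d_*·‖y_*‖₂), 0); (s(A_t,y_t,0),1), ℓ(A_t) ) ≤ 0, and |M_T| ≤ (D̃² + 1)/d_*² = ((D + 2/c)² + 1)/d_*². -/

import Mathlib

noncomputable section
open scoped Classical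
open scoped RealInnerProductSpace

/-- Feature space: `ℝ^d` with the Euclidean (`ℓ₂`) norm, which is self-dual. -/
abbrev E (d : ℕ) : Type := EuclideanSpace ℝ (Fin d)

/-- Sign function with the convention `sgn 0 = +1`. -/
def sgn (t : ℝ) : ℝ := if 0 ≤ t then 1 else -1

/-- The selection map for the Euclidean norm: `v(y) = y/‖y‖₂`, `v(0) = 0`. -/
def vE {d : ℕ} (y : E d) : E d := ‖y‖⁻¹ • y

/-- Predicted label `p̂(x,y,b) = sgn(⟪y,x⟫ + b - 2‖y‖₂/c)`. -/
def predE {d : ℕ} (c : ℝ) (x y : E d) (b : ℝ) : ℝ :=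
  sgn (⟪y, x⟫ + b - 2 * ‖y‖ / c)

/-- Agent response `r(A,y,b)` for `ℓ₂`-norm costs. -/
def respE {d : ℕ} (c : ℝ) (A y : E d) (b : ℝ) : E d :=
  if y ≠ 0 ∧ 0 ≤ (⟪y, A⟫ + b) / ‖y‖ ∧ (⟪y, A⟫ + b) / ‖y‖ < 2 / c
  then A + (2 / c - (⟪y, A⟫ + b) / ‖y‖) • vE y
  else A

/-- Proxy point `s(A,y,b)` for `ℓ₂`-norm costs. -/
def proxyE {d : ℕ} (lbl : E d → ℝ) (c : ℝ) (A y : E d) (b : ℝ) : E d :=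
  if y ≠ 0 ∧ 0 ≤ (⟪y, A⟫ + b) / ‖y‖ ∧ (⟪y, A⟫ + b) / ‖y‖ < 2 / c ∧ lbl A = -1
  then A - ((⟪y, A⟫ + b) / ‖y‖) • vE y
  else respE c A y b

/-- Margin function `h(y,b;S⁺,S⁻)`. -/
def marginFn {d : ℕ} (Sp Sm : Set (E d)) (y : E d) (b : ℝ) : ℝ :=
  min (sInf ((fun x => ⟪y, x⟫ + b) '' Sp)) (sInf ((fun x => -⟪y, x⟫ - b) '' Sm))

/-- Euclidean projection onto the unit `ℓ₂`-ball. -/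
def projB {d : ℕ} (w : E d) : E d := if ‖w‖ ≤ 1 then w else ‖w‖⁻¹ • w

/-- Hinge loss `L_hinge((y,b); (x,1), λ) = max{0, 1 - λ(⟪y,x⟫ + b)}`. -/
def hinge {d : ℕ} (q : E d × ℝ) (x : E d) (lab : ℝ) : ℝ :=
  max 0 (1 - lab * (⟪q.1, x⟫ + q.2))

lemma inner_vE {d : ℕ} (y : E d) (hy : y ≠ 0) : ⟪y, vE y⟫ = ‖y‖ := by
  have hny : (0:ℝ) < ‖y‖ := norm_pos_iff.mpr hy
  rw [vE, real_inner_smul_right, real_inner_self_eq_norm_sq]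
  field_simp

lemma norm_vE {d : ℕ} (y : E d) (hy : y ≠ 0) : ‖vE y‖ = 1 := by
  have hny : (0:ℝ) < ‖y‖ := norm_pos_iff.mpr hy
  rw [vE, norm_smul, Real.norm_eq_abs, abs_inv, abs_of_pos hny, inv_mul_cancel₀ hny.ne']

lemma mistake_cases {d : ℕ} {c : ℝ} (hc : 0 < c) (lbl : E d → ℝ)
    (A y : E d) (hl : lbl A = 1 ∨ lbl A = -1)
    (hm : predE c (respE c A y 0) y 0 ≠ lbl A) :
    (proxyE lbl c A y 0 = A ∧ lbl A * ⟪y, A⟫ ≤ 0) ∨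
    (y ≠ 0 ∧ lbl A = -1 ∧ 0 ≤ ⟪y, A⟫ ∧ ⟪y, A⟫ / ‖y‖ < 2 / c ∧
      proxyE lbl c A y 0 = A - (⟪y, A⟫ / ‖y‖) • vE y) := by
  by_cases hy : y = 0
  · subst hy
    left
    constructor
    · simp [proxyE, respE]
    · simp [inner_zero_left]
  · have hny : (0:ℝ) < ‖y‖ := norm_pos_iff.mpr hy
    by_cases hband : 0 ≤ ⟪y, A⟫ / ‖y‖ ∧ ⟪y, A⟫ / ‖y‖ < 2 / c
    · rcases hl with h1 | h1
      · exfalso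
        have hr : respE c A y 0 = A + (2 / c - ⟪y, A⟫ / ‖y‖) • vE y := by
          rw [respE, if_pos]
          · rw [add_zero]
          · rw [add_zero]; exact ⟨hy, hband.1, hband.2⟩
        have h2 : ⟪y, respE c A y 0⟫ = 2 * ‖y‖ / c := by
          rw [hr, inner_add_right, real_inner_smul_right, inner_vE y hy]
          field_simp
          ring
        apply hm
        rw [predE, h2, h1]
        simp [sgn]
      · right
        have hqA : 0 ≤ ⟪y, A⟫ := by
          have h2 := mul_nonneg hband.1 hny.le
          rwa [div_mul_cancel₀ _ hny.ne'] at h2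
        refine ⟨hy, h1, hqA, hband.2, ?_⟩
        rw [proxyE, if_pos]
        · rw [add_zero]
        · rw [add_zero]; exact ⟨hy, hband.1, hband.2, h1⟩
    · have hr : respE c A y 0 = A := by
        rw [respE, if_neg]
        rw [add_zero]
        tauto
      have hp : proxyE lbl c A y 0 = A := by
        rw [proxyE, if_neg, hr]
        rw [add_zero]
        tauto
      left
      refine ⟨hp, ?_⟩
      rw [not_and_or, not_le, not_lt] at hband
      rcases hband with hb1 | hb2
      · have hAneg : ⟪y, A⟫ < 0 := by
          by_contra h
          push_neg at h
          exact absurd (div_nonneg h (norm_nonneg y)) (not_le.mpr hb1)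
        have hpred : predE c (respE c A y 0) y 0 = -1 := by
          rw [hr, predE, sgn, if_neg]
          push_neg
          have : 0 < 2 * ‖y‖ / c := by positivity
          linarith
        have hlA : lbl A = 1 := by
          rcases hl with h | h
          · exact h
          · exact absurd (hpred.trans h.symm) hm
        rw [hlA]; linarith
      · have hAge : 2 * ‖y‖ / c ≤ ⟪y, A⟫ := by
          rw [div_le_iff₀ hc]
          exact (div_le_div_iff₀ hc hny).mp hb2
        have hpred : predE c (respE c A y 0) y 0 = 1 := by
          rw [hr, predE, sgn, if_pos]; linarith
        have hlA : lbl A = -1 := by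
          rcases hl with h | h
          · exact absurd (hpred.trans h.symm) hm
          · exact h
        have : 0 ≤ ⟪y, A⟫ := le_trans (by positivity) hAge
        rw [hlA]; nlinarith

lemma proxy_props {d : ℕ} {c : ℝ} (hc : 0 < c) (lbl : E d → ℝ)
    (A y : E d) (hl : lbl A = 1 ∨ lbl A = -1)
    (hm : predE c (respE c A y 0) y 0 ≠ lbl A)
    (ystar : E d) (dstar : ℝ)
    (hsA : dstar * ‖ystar‖ ≤ lbl A * ⟪ystar, A⟫)
    (hpos : 0 ≤ ⟪ystar, y⟫) :
    lbl A * ⟪y, proxyE lbl c A y 0⟫ ≤ 0 ∧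
    ‖proxyE lbl c A y 0‖ ≤ ‖A‖ + 2 / c ∧
    dstar * ‖ystar‖ ≤ lbl A * ⟪ystar, proxyE lbl c A y 0⟫ := by
  rcases mistake_cases hc lbl A y hl hm with ⟨hs, h1⟩ | ⟨hy, hlm, hq0, hq2, hs⟩
  · refine ⟨by rw [hs]; exact h1, ?_, by rw [hs]; exact hsA⟩
    rw [hs]
    have : 0 < 2 / c := by positivity
    linarith
  · have hny : (0:ℝ) < ‖y‖ := norm_pos_iff.mpr hy
    set α : ℝ := ⟪y, A⟫ / ‖y‖ with hα
    have hα0 : 0 ≤ α := div_nonneg hq0 hny.le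
    have hαm : α * ‖y‖ = ⟪y, A⟫ := div_mul_cancel₀ _ hny.ne'
    refine ⟨?_, ?_, ?_⟩
    · rw [hs, inner_sub_right, real_inner_smul_right, inner_vE y hy, hlm, hαm]
      ring_nf
      simp
    · rw [hs]
      calc ‖A - α • vE y‖ ≤ ‖A‖ + ‖α • vE y‖ := norm_sub_le _ _
        _ ≤ ‖A‖ + 2 / c := by
          rw [norm_smul, norm_vE y hy, mul_one, Real.norm_eq_abs, abs_of_nonneg hα0]
          linarith
    · rw [hs, inner_sub_right, real_inner_smul_right]
      have hvy : ⟪ystar, vE y⟫ = ‖y‖⁻¹ * ⟪ystar, y⟫ := by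
        rw [vE, real_inner_smul_right]
      have h2 : 0 ≤ α * ⟪ystar, vE y⟫ := by
        rw [hvy]
        positivity
      rw [hlm] at hsA ⊢
      nlinarith

set_option maxHeartbeats 1000000 in
/-- Theorem `perceptron-mistake-bound2`: for `ℓ₂`-norm costs,
under the margin-without-intercept and boundedness assumptions, the strategic
perceptron with cone `𝕃 = ℝ^d × {0}` and `γ = 1` keeps `b_t = 0`, has nonpositive
hinge loss against `y_*/(d_*‖y_*‖₂)`, and makes at most `((D+2/c)²+1)/d_*²`
mistakes. -/
theorem alg3_mistake_bound_zero_intercept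
    {d : ℕ} (hd : 1 ≤ d)
    (c : ℝ) (hc : 0 < c)
    (lbl : E d → ℝ) (hlbl : ∀ A : E d, lbl A = 1 ∨ lbl A = -1)
    (𝒜 : Set (E d))
    -- margin-without-intercept assumption
    (ystar : E d) (dstar : ℝ)
    (hystar : ystar ≠ 0) (hdstar : 0 < dstar)
    (hsep : ∀ A ∈ 𝒜, dstar * ‖ystar‖ ≤ lbl A * ⟪ystar, A⟫)
    (hmax : ∀ (y : E d) (t : ℝ), y ≠ 0 →
      (∀ A ∈ 𝒜, t * ‖y‖ ≤ lbl A * ⟪y, A⟫) → t ≤ dstar)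
    -- boundedness assumption
    (hbdd : ∃ D : ℝ, ∀ A ∈ 𝒜, ‖A‖ ≤ D)
    -- Algorithm 3 with cone `𝕃 = ℝ^d × {0}` and stepsize `γ = 1`
    (T : ℕ) (Ag : ℕ → E d) (hAg : ∀ t, Ag t ∈ 𝒜)
    (ys : ℕ → E d) (bs : ℕ → ℝ)
    (hinit : ys 0 = 0 ∧ bs 0 = 0)
    (hupd : ∀ t : ℕ,
      (predE c (respE c (Ag t) (ys t) (bs t)) (ys t) (bs t) ≠ lbl (Ag t) →
        ys (t + 1) = ys t + lbl (Ag t) • proxyE lbl c (Ag t) (ys t) (bs t) ∧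
        bs (t + 1) = 0) ∧
      (predE c (respE c (Ag t) (ys t) (bs t)) (ys t) (bs t) = lbl (Ag t) →
        ys (t + 1) = ys t ∧ bs (t + 1) = bs t)) :
    (∀ t : ℕ, bs t = 0) ∧
    ∀ M : Finset ℕ,
      M = (Finset.range (T + 1)).filter (fun t =>
        predE c (respE c (Ag t) (ys t) (bs t)) (ys t) (bs t) ≠ lbl (Ag t)) →
    ∀ D : ℝ, D = sSup ((fun A => ‖A‖) '' 𝒜) →
      (∑ t ∈ M, hinge ((dstar * ‖ystar‖)⁻¹ • ystar, 0)
          (proxyE lbl c (Ag t) (ys t) 0) (lbl (Ag t)) ≤ 0) ∧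
      (M.card : ℝ) ≤ ((D + 2 / c) ^ 2 + 1) / dstar ^ 2 := by
  obtain ⟨hy0, hb0⟩ := hinit
  have hb : ∀ t, bs t = 0 := by
    intro t
    induction t with
    | zero => exact hb0
    | succ n ih =>
      by_cases h : predE c (respE c (Ag n) (ys n) (bs n)) (ys n) (bs n) = lbl (Ag n)
      · rw [((hupd n).2 h).2, ih]
      · exact ((hupd n).1 h).2
  refine ⟨hb, ?_⟩
  set mk : ℕ → Prop := fun t => predE c (respE c (Ag t) (ys t) 0) (ys t) 0 ≠ lbl (Ag t)
    with hmkdef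
  have hupd' : ∀ t : ℕ,
      (mk t → ys (t + 1) = ys t + lbl (Ag t) • proxyE lbl c (Ag t) (ys t) 0) ∧
      (¬ mk t → ys (t + 1) = ys t) := by
    intro t
    have h := hupd t
    rw [hb t] at h
    refine ⟨fun hm => (h.1 ?_).1, fun hm => (h.2 ?_).1⟩
    · simpa [hmkdef] using hm
    · have : ¬ (predE c (respE c (Ag t) (ys t) 0) (ys t) 0 ≠ lbl (Ag t)) := by
        simpa [hmkdef] using hm
      exact of_not_not this
  have hnys : (0:ℝ) < ‖ystar‖ := norm_pos_iff.mpr hystar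
  have hdn : (0:ℝ) < dstar * ‖ystar‖ := mul_pos hdstar hnys
  have hpos : ∀ t, 0 ≤ ⟪ystar, ys t⟫ := by
    intro t
    induction t with
    | zero => rw [hy0]; simp
    | succ n ih =>
      by_cases h : mk n
      · rw [(hupd' n).1 h, inner_add_right, real_inner_smul_right]
        have hm : predE c (respE c (Ag n) (ys n) 0) (ys n) 0 ≠ lbl (Ag n) := by
          simpa [hmkdef] using h
        have P := proxy_props hc lbl (Ag n) (ys n) (hlbl _) hm ystar dstar
          (hsep _ (hAg n)) ih
        linarith [P.2.2, hdn.le]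
      · rw [(hupd' n).2 h]; exact ih
  intro M hM D hDdef
  have hDub : ∀ A ∈ 𝒜, ‖A‖ ≤ D := by
    intro A hA
    rw [hDdef]
    obtain ⟨D0, hD0⟩ := hbdd
    refine le_csSup ⟨D0, ?_⟩ (Set.mem_image_of_mem _ hA)
    rintro x ⟨a, ha, rfl⟩
    exact hD0 a ha
  have props : ∀ t, mk t →
      lbl (Ag t) * ⟪ys t, proxyE lbl c (Ag t) (ys t) 0⟫ ≤ 0 ∧
      ‖proxyE lbl c (Ag t) (ys t) 0‖ ≤ D + 2 / c ∧
      dstar * ‖ystar‖ ≤ lbl (Ag t) * ⟪ystar, proxyE lbl c (Ag t) (ys t) 0⟫ := by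
    intro t ht
    have hm : predE c (respE c (Ag t) (ys t) 0) (ys t) 0 ≠ lbl (Ag t) := by
      simpa [hmkdef] using ht
    have P := proxy_props hc lbl (Ag t) (ys t) (hlbl _) hm ystar dstar
      (hsep _ (hAg t)) (hpos t)
    exact ⟨P.1, P.2.1.trans (by linarith [hDub _ (hAg t)]), P.2.2⟩
  have hMeq : M = (Finset.range (T + 1)).filter (fun t => mk t) := by
    rw [hM]
    apply Finset.filter_congr
    intro t _
    rw [hb t]
  constructor
  · -- hinge sum is zero
    refine le_of_eq (Finset.sum_eq_zero ?_)
    intro t htM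
    rw [hMeq] at htM
    have ht : mk t := (Finset.mem_filter.mp htM).2
    have h3 := (props t ht).2.2
    rw [hinge]
    apply max_eq_left
    simp only [add_zero, real_inner_smul_left]
    have h4 := mul_le_mul_of_nonneg_left h3 (inv_nonneg.mpr hdn.le)
    rw [inv_mul_cancel₀ hdn.ne'] at h4
    linarith [h4]
  · -- mistake bound
    have hX0 : (0:ℝ) < (D + 2 / c) ^ 2 + 1 := by positivity
    have hmono : ∀ n : ℕ,
        ((((Finset.range n).filter (fun t => mk t)).card : ℝ) * (dstar * ‖ystar‖)
          ≤ ⟪ystar, ys n⟫) ∧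
        ‖ys n‖ ^ 2 ≤ (((Finset.range n).filter (fun t => mk t)).card : ℝ) * ((D + 2 / c) ^ 2 + 1) := by
      intro n
      induction n with
      | zero => simp [hy0]
      | succ n ih =>
        by_cases h : mk n
        · have hcard : ((Finset.range (n + 1)).filter (fun t => mk t)).card
              = ((Finset.range n).filter (fun t => mk t)).card + 1 := by
            rw [Finset.range_add_one, Finset.filter_insert, if_pos h,
              Finset.card_insert_of_notMem]
            intro hcontra
            exact Finset.notMem_range_self (Finset.mem_filter.mp hcontra).1
          have P := props n h
          have hl2 : ‖lbl (Ag n)‖ = 1 := by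
            rcases hlbl (Ag n) with h1 | h1 <;> simp [h1]
          rw [(hupd' n).1 h, hcard]
          push_cast
          constructor
          · rw [inner_add_right, real_inner_smul_right]
            linarith [ih.1, P.2.2]
          · rw [norm_add_sq_real, real_inner_smul_right, norm_smul, hl2, one_mul]
            have hns2 : ‖proxyE lbl c (Ag n) (ys n) 0‖ ^ 2 ≤ (D + 2 / c) ^ 2 := by
              have h0 := norm_nonneg (proxyE lbl c (Ag n) (ys n) 0)
              have := mul_self_le_mul_self h0 P.2.1
              nlinarith [this]
            nlinarith [ih.2, P.1, hns2]
        · have hcard : ((Finset.range (n + 1)).filter (fun t => mk t)).card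
              = ((Finset.range n).filter (fun t => mk t)).card := by
            rw [Finset.range_add_one, Finset.filter_insert, if_neg h]
          rw [(hupd' n).2 h, hcard]
          exact ih
    obtain ⟨h1, h2⟩ := hmono (T + 1)
    have hfin : ∀ k : ℝ, 0 ≤ k → k * (dstar * ‖ystar‖) ≤ ⟪ystar, ys (T + 1)⟫ →
        ‖ys (T + 1)‖ ^ 2 ≤ k * ((D + 2 / c) ^ 2 + 1) → k ≤ ((D + 2 / c) ^ 2 + 1) / dstar ^ 2 := by
      intro k hk0 hk1' hk2'
      have hCS : ⟪ystar, ys (T + 1)⟫ ≤ ‖ystar‖ * ‖ys (T + 1)‖ :=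
        real_inner_le_norm _ _
      have hk1 : k * dstar ≤ ‖ys (T + 1)‖ := by
        have h5 : ‖ystar‖ * (k * dstar) ≤ ‖ystar‖ * ‖ys (T + 1)‖ := by
          linarith [hk1', hCS]
        exact (mul_le_mul_iff_right₀ hnys).mp h5
      have hsq : k ^ 2 * dstar ^ 2 ≤ k * ((D + 2 / c) ^ 2 + 1) := by
        have h7 := mul_self_le_mul_self (mul_nonneg hk0 hdstar.le) hk1
        have h8 := sq_nonneg (‖ys (T + 1)‖)
        nlinarith [h7, hk2']
      rw [le_div_iff₀ (by positivity : (0:ℝ) < dstar ^ 2)]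
      rcases eq_or_lt_of_le hk0 with hk | hk
      · rw [← hk, zero_mul]; exact hX0.le
      · have h6 : k * (k * dstar ^ 2) ≤ k * ((D + 2 / c) ^ 2 + 1) := by linarith [hsq]
        exact (mul_le_mul_iff_right₀ hk).mp h6
    rw [hMeq]
    exact hfin _ (Nat.cast_nonneg _) h1 h2
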